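/- arXiv:1503.06245 — 5 statements merged into one kernel-verified Lean document; each statement's English description precedes it below -/
import Mathlib

section
/- For the Moran fixation probability ρ(s) = (1 - 1/(1+s)) / (1 - 1/(1+s)^N) with population size N ≥ 1 and selective advantage s > 0, the ratio between the fixation probability of an advantageous mutant and that of the corresponding disadvantageous mutant satisfies ρ(s) / ρ(-s/(1+s)) = (1+s)^(N-1). -/
/-!
Write `u = 1 + s`. The disadvantageous mutant has `1 + t = u⁻¹`, so its fixation probability is
`(1 - u) / (1 - u ^ N)`, while clearing denominators in `ρ(s)` gives `u ^ (N - 1) (u - 1) / (u ^ N - 1)`.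
-/

/-- Moran fixation probability for a mutant with selective advantage `t`
in a population of size `N`. -/
noncomputable def moranRho (N : ℕ) (t : ℝ) : ℝ :=
  (1 - 1 / (1 + t)) / (1 - 1 / (1 + t) ^ N)

lemma moranRho_eq_pow_mul_of_mul_eq_one {N : ℕ} (hN : N ≠ 0) {t t' : ℝ}
    (h : (1 + t) * (1 + t') = 1) :
    moranRho N t = (1 + t) ^ (N - 1) * moranRho N t' := by
  obtain ⟨M, rfl⟩ := Nat.exists_eq_add_one_of_ne_zero hN
  have ht' : 1 + t' = (1 + t)⁻¹ := eq_inv_of_mul_eq_one_right h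
  have hu : 1 + t ≠ 0 := left_ne_zero_of_mul_eq_one h
  simp only [moranRho, ht', one_div, inv_inv, inv_pow, Nat.add_sub_cancel]
  by_cases huN : (1 + t) ^ (M + 1) = 1
  · -- both denominators vanish, so both sides are `x / 0 = 0`
    simp [huN]
  · have hsub : 1 - (1 + t) ^ (M + 1) ≠ 0 := sub_ne_zero.mpr (Ne.symm huN)
    field_simp
    ring

lemma moranRho_ne_zero {N : ℕ} (hN : N ≠ 0) {t : ℝ} (ht : -1 < t) (ht0 : t ≠ 0) :
    moranRho N t ≠ 0 := by
  have hu : 0 ≤ 1 + t := by linarith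
  have hu1 : 1 + t ≠ 1 := by simpa using ht0
  have huN : (1 + t) ^ N ≠ 1 := by rwa [Ne, pow_eq_one_iff_of_nonneg hu hN]
  refine div_ne_zero ?_ ?_ <;> rw [sub_ne_zero, ne_comm, one_div, Ne, inv_eq_one]
  exacts [hu1, huN]

theorem moran_ratio (N : ℕ) (hN : 1 ≤ N) (s : ℝ) (hs : 0 < s) :
    moranRho N s / moranRho N (-s / (1 + s)) = (1 + s) ^ (N - 1) := by
  have hN0 : N ≠ 0 := Nat.one_le_iff_ne_zero.mp hN
  have hu : 0 < 1 + s := by linarith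
  have hrecip : (1 + s) * (1 + -s / (1 + s)) = 1 := by field_simp; ring
  have hdis_gt : -1 < -s / (1 + s) := by
    rw [lt_div_iff₀ hu]
    linarith
  have hdis_ne : -s / (1 + s) ≠ 0 := div_ne_zero (neg_ne_zero.mpr hs.ne') hu.ne'
  rw [div_eq_iff (moranRho_ne_zero hN0 hdis_gt hdis_ne)]
  exact moranRho_eq_pow_mul_of_mul_eq_one hN0 hrecip
end

section
/- Let Λ be the stochastic 4×4 matrix over states {(B,B),(B,R),(R,B),(R,R)} of the battle-of-the-sexes embedded Markov chain with common population size N ≥ 2 and selection strength η > 0, whose off-diagonal entries are Λ₁₂ = c·ρ(-2η/(1+2η)), Λ₁₃ = c·ρ(-η/(1+η)), Λ₂₁ = c·ρ(2η), Λ₂₄ = c·ρ(2η), Λ₃₁ = c·ρ(η), Λ₃₄ = c·ρ(η), Λ₄₂ = c·ρ(-2η/(1+2η)), Λ₄₃ = c·ρ(-η/(1+η)), all other off-diagonal entries zero, diagonal entries chosen so each row sums to 1, where ρ(s) = (1 - 1/(1+s))/(1 - 1/(1+s)^N) and c > 0 is a constant. Then the vector λ proportional to (1, (1+2η)^{-(N-1)},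 (1+η)^{-(N-1)}, 1) satisfies λΛ = λ. -/
/-- Off-diagonal transition rates of the battle-of-the-sexes embedded chain. -/
noncomputable def bosOff (N : ℕ) (η c : ℝ) : Matrix (Fin 4) (Fin 4) ℝ :=
  !![0, c * moranRho N (-2 * η / (1 + 2 * η)), c * moranRho N (-η / (1 + η)), 0;
     c * moranRho N (2 * η), 0, 0, c * moranRho N (2 * η);
     c * moranRho N η, 0, 0, c * moranRho N η;
     0, c * moranRho N (-2 * η / (1 + 2 * η)), c * moranRho N (-η / (1 + η)), 0]

/-- The embedded Markov matrix: diagonal entries make each row sum to one. -/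
noncomputable def bosLambda (N : ℕ) (η c : ℝ) : Matrix (Fin 4) (Fin 4) ℝ :=
  fun i j => if i = j then 1 - ∑ k, bosOff N η c i k else bosOff N η c i j

/-!
The stationary vector satisfies detailed balance, `λᵢ Λᵢⱼ = λⱼ Λⱼᵢ` for `i ≠ j`, and detailed
balance forces stationarity once the diagonal is chosen to make rows sum to one. Detailed balance
itself reduces to the identity `ρ(-s/(1+s)) = (1+s)^{-(N-1)} ρ(s)`, read off from the closed form
`ρ(t) = t (1+t)^{N-1} / ((1+t)^N - 1)`.
-/

theorem moranRho_eq {N : ℕ} (hN : N ≠ 0) {t : ℝ} (ht : 1 + t ≠ 0) :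
    moranRho N t = t * (1 + t) ^ (N - 1) / ((1 + t) ^ N - 1) := by
  obtain ⟨M, rfl⟩ := Nat.exists_eq_add_one_of_ne_zero hN
  rw [moranRho, Nat.add_sub_cancel, one_sub_div ht, one_sub_div (pow_ne_zero _ ht),
    div_div_div_eq, add_sub_cancel_left, pow_succ', mul_left_comm, mul_div_mul_left _ _ ht]

theorem moranRho_neg_div_one_add {N : ℕ} (hN : N ≠ 0) {s : ℝ} (hs : 1 + s ≠ 0) :
    moranRho N (-s / (1 + s)) = ((1 + s) ^ (N - 1))⁻¹ * moranRho N s := by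
  have h : 1 + -s / (1 + s) = (1 + s)⁻¹ := by field_simp; ring
  rw [moranRho_eq hN hs, moranRho_eq hN (by rw [h]; exact inv_ne_zero hs), h, inv_pow, inv_pow]
  obtain ⟨M, rfl⟩ := Nat.exists_eq_add_one_of_ne_zero hN
  by_cases hpow : (1 + s) ^ (M + 1) = 1
  · simp [hpow] -- both sides are `x / 0 = 0`
  · have hden : ((1 + s) ^ (M + 1))⁻¹ - 1 ≠ 0 := by
      rwa [sub_ne_zero, inv_ne_one]
    rw [Nat.add_sub_cancel]
    field_simp
    ring

namespace Matrix

variable {n R : Type*} [Fintype n] [DecidableEq n] [CommRing R]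

def withRowSumsOne (Q : Matrix n n R) : Matrix n n R :=
  fun i j => if i = j then 1 - ∑ k, Q i k else Q i j

theorem vecMul_withRowSumsOne_of_detailed_balance {Q : Matrix n n R} (hQ : ∀ i, Q i i = 0)
    {v : n → R} (hv : ∀ i j, v i * Q i j = v j * Q j i) :
    v ᵥ* withRowSumsOne Q = v := by
  funext j
  have hcol : ∀ i, withRowSumsOne Q i j = (if i = j then 1 - ∑ k, Q j k else 0) + Q i j := by
    intro i
    by_cases h : i = j
    · simp [withRowSumsOne, h, hQ]
    · simp [withRowSumsOne, h]
  simp only [vecMul, dotProduct, hcol, mul_add, Finset.sum_add_distrib, mul_ite, mul_zero,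
    Finset.sum_ite_eq', Finset.mem_univ, if_true, hv _ j, ← Finset.mul_sum]
  ring

end Matrix

theorem bosLambda_eq_withRowSumsOne (N : ℕ) (η c : ℝ) :
    bosLambda N η c = (bosOff N η c).withRowSumsOne := rfl

theorem bosOff_diag (N : ℕ) (η c : ℝ) (i : Fin 4) : bosOff N η c i i = 0 := by
  fin_cases i <;> rfl

theorem bosOff_detailed_balance {N : ℕ} (hN : N ≠ 0) {η : ℝ} (h₁ : 1 + η ≠ 0)
    (h₂ : 1 + 2 * η ≠ 0) (c : ℝ) :
    let v : Fin 4 → ℝ := ![1, ((1 + 2 * η) ^ (N - 1))⁻¹, ((1 + η) ^ (N - 1))⁻¹, 1]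
    ∀ i j, v i * bosOff N η c i j = v j * bosOff N η c j i := by
  intro v i j
  have hρ₂ : moranRho N (-2 * η / (1 + 2 * η))
      = ((1 + 2 * η) ^ (N - 1))⁻¹ * moranRho N (2 * η) := by
    rw [neg_mul, moranRho_neg_div_one_add hN h₂]
  have hρ₁ : moranRho N (-η / (1 + η)) = ((1 + η) ^ (N - 1))⁻¹ * moranRho N η :=
    moranRho_neg_div_one_add hN h₁
  simp only [v, bosOff, hρ₂, hρ₁]
  fin_cases i <;> fin_cases j <;> simp <;> ring

theorem bos_stationary_general (N : ℕ) (hN : 2 ≤ N) (η : ℝ) (hη : 0 < η) (c : ℝ) :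
    let v : Fin 4 → ℝ :=
      ![1, ((1 + 2 * η) ^ (N - 1))⁻¹, ((1 + η) ^ (N - 1))⁻¹, 1]
    ∀ j, (∑ i, v i * bosLambda N η c i j) = v j := by
  intro v j
  have hbalance : ∀ i j, v i * bosOff N η c i j = v j * bosOff N η c j i :=
    bosOff_detailed_balance (by omega) (by positivity) (by positivity) c
  rw [bosLambda_eq_withRowSumsOne]
  exact congrFun
    (Matrix.vecMul_withRowSumsOne_of_detailed_balance (bosOff_diag N η c) hbalance) j

theorem bos_stationary (N : ℕ) (hN : 2 ≤ N) (η : ℝ) (hη : 0 < η) (c : ℝ) (hc : 0 < c) :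
    let v : Fin 4 → ℝ :=
      ![1, ((1 + 2 * η) ^ (N - 1))⁻¹, ((1 + η) ^ (N - 1))⁻¹, 1]
    ∀ j, (∑ i, v i * bosLambda N η c i j) = v j :=
  bos_stationary_general N hN η hη c
end

section
/- A Markov transition kernel P on a finite state space with all entries strictly positive (P(x,y) > 0 for all x, y) admits a unique stationary distribution, i.e., a unique probability vector λ with λP = λ, and moreover λ(x) > 0 for all x. -/
open Finset

private lemma sign_lemma {S : Type*} [Fintype S] [Nonempty S]
    (P : S → S → ℝ) (hpos : ∀ x y, 0 < P x y) (hP1 : ∀ x, ∑ y, P x y = 1)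
    (v : S → ℝ) (hv : ∀ y, ∑ x, v x * P x y = v y) :
    (∀ x, 0 ≤ v x) ∨ (∀ x, v x ≤ 0) := by
  by_contra h
  push_neg at h
  obtain ⟨⟨x₂, hx₂⟩, ⟨x₁, hx₁⟩⟩ := h
  have key : ∀ y, |v y| < ∑ x, |v x| * P x y := by
    intro y
    rw [← hv y]
    rw [abs_lt]
    constructor
    · rw [neg_lt]
      rw [← Finset.sum_neg_distrib]
      apply Finset.sum_lt_sum
      · intro i _
        nlinarith [abs_nonneg (v i), neg_abs_le (v i), hpos i y]
      · exact ⟨x₁, mem_univ _, by nlinarith [abs_of_pos hx₁, hpos x₁ y]⟩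
    · apply Finset.sum_lt_sum
      · intro i _
        nlinarith [le_abs_self (v i), hpos i y]
      · exact ⟨x₂, mem_univ _, by nlinarith [abs_of_neg hx₂, hpos x₂ y]⟩
  have h1 : ∑ y, |v y| < ∑ y, ∑ x, |v x| * P x y :=
    Finset.sum_lt_sum_of_nonempty univ_nonempty (fun y _ => key y)
  have h2 : ∑ y, ∑ x, |v x| * P x y = ∑ x, |v x| := by
    rw [Finset.sum_comm]
    simp only [← Finset.mul_sum]
    simp [hP1]
  rw [h2] at h1
  exact lt_irrefl _ h1

private lemma pos_lemma {S : Type*} [Fintype S] [Nonempty S]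
    (P : S → S → ℝ) (hpos : ∀ x y, 0 < P x y)
    (l : S → ℝ) (h0 : ∀ x, 0 ≤ l x) (hs : ∑ x, l x = 1)
    (hst : ∀ y, ∑ x, l x * P x y = l y) : ∀ x, 0 < l x := by
  have hex : ∃ x₀, 0 < l x₀ := by
    by_contra h
    push_neg at h
    have : ∑ x, l x = 0 :=
      Finset.sum_eq_zero (fun x _ => le_antisymm (h x) (h0 x))
    rw [this] at hs; norm_num at hs
  obtain ⟨x₀, hx₀⟩ := hex
  intro y
  rw [← hst y]
  exact Finset.sum_pos' (fun x _ => mul_nonneg (h0 x) (hpos x y).le)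
    ⟨x₀, mem_univ _, mul_pos hx₀ (hpos x₀ y)⟩

theorem positive_kernel_unique_stationary {S : Type*} [Fintype S] [Nonempty S]
    (P : S → S → ℝ) (hpos : ∀ x y, 0 < P x y) (hP1 : ∀ x, ∑ y, P x y = 1) :
    (∃! l : S → ℝ, (∀ x, 0 ≤ l x) ∧ (∑ x, l x = 1) ∧
      ∀ y, ∑ x, l x * P x y = l y) ∧
    (∀ l : S → ℝ, ((∀ x, 0 ≤ l x) ∧ (∑ x, l x = 1) ∧
      ∀ y, ∑ x, l x * P x y = l y) → ∀ x, 0 < l x) := by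
  classical
  -- step 1: a nonzero left eigenvector
  have hker : ∃ v : S → ℝ, v ≠ 0 ∧ ∀ y, ∑ x, v x * P x y = v y := by
    set M : Matrix S S ℝ := Matrix.of P - 1 with hM
    have hdet : M.det = 0 := by
      rw [← Matrix.exists_mulVec_eq_zero_iff]
      refine ⟨1, ?_, ?_⟩
      · intro h
        have := congrFun h (Classical.arbitrary S)
        norm_num at this
      · funext x
        simp [Matrix.mulVec, dotProduct, hM, Matrix.sub_apply,
          Finset.sum_sub_distrib, hP1 x, Matrix.one_apply]
    obtain ⟨v, hv0, hv⟩ := Matrix.exists_vecMul_eq_zero_iff.mpr hdet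
    refine ⟨v, hv0, fun y => ?_⟩
    have := congrFun hv y
    simp only [Matrix.vecMul, dotProduct, hM, Matrix.sub_apply,
      Matrix.of_apply, Matrix.one_apply, Pi.zero_apply, mul_sub,
      Finset.sum_sub_distrib, mul_ite, mul_one, mul_zero,
      Finset.sum_ite_eq, Finset.sum_ite_eq', mem_univ, if_true] at this
    linarith
  obtain ⟨v, hv0, hv⟩ := hker
  -- step 2: wlog v ≥ 0
  have hnn : ∃ w : S → ℝ, w ≠ 0 ∧ (∀ x, 0 ≤ w x) ∧ ∀ y, ∑ x, w x * P x y = w y := by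
    rcases sign_lemma P hpos hP1 v hv with h | h
    · exact ⟨v, hv0, h, hv⟩
    · refine ⟨-v, fun hc => hv0 (by simpa [neg_eq_zero] using hc),
        fun x => by simpa using neg_nonneg.mpr (h x), fun y => ?_⟩
      simp only [Pi.neg_apply, neg_mul, Finset.sum_neg_distrib]
      rw [hv y]
  obtain ⟨w, hw0, hwnn, hw⟩ := hnn
  have hex : ∃ x, 0 < w x := by
    by_contra h
    push_neg at h
    apply hw0
    funext x
    exact le_antisymm (h x) (hwnn x)
  have hsum : 0 < ∑ x, w x :=
    Finset.sum_pos' (fun x _ => hwnn x) ⟨hex.choose, mem_univ _, hex.choose_spec⟩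
  set s := ∑ x, w x with hs
  set l : S → ℝ := fun x => w x / s with hl
  have hl0 : ∀ x, 0 ≤ l x := fun x => div_nonneg (hwnn x) hsum.le
  have hl1 : ∑ x, l x = 1 := by
    simp only [hl, div_eq_mul_inv, ← Finset.sum_mul]
    rw [← hs, mul_inv_cancel₀ hsum.ne']
  have hlst : ∀ y, ∑ x, l x * P x y = l y := by
    intro y
    simp only [hl, div_mul_eq_mul_div, ← Finset.sum_div, hw y]
  -- uniqueness
  have huniq : ∀ m : S → ℝ, ((∀ x, 0 ≤ m x) ∧ (∑ x, m x = 1) ∧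
      ∀ y, ∑ x, m x * P x y = m y) → m = l := by
    rintro m ⟨hm0, hm1, hmst⟩
    have hdst : ∀ y, ∑ x, (m x - l x) * P x y = (m y - l y) := by
      intro y
      simp only [sub_mul, Finset.sum_sub_distrib, hmst y, hlst y]
    have hdsum : ∑ x, (m x - l x) = 0 := by
      rw [Finset.sum_sub_distrib, hm1, hl1]; ring
    funext x
    rcases sign_lemma P hpos hP1 _ hdst with h | h
    · have : ∀ i ∈ univ, m i - l i = 0 :=
        (Finset.sum_eq_zero_iff_of_nonneg (fun i _ => h i)).mp hdsum
      have := this x (mem_univ x); linarith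
    · have : ∀ i ∈ univ, -(m i - l i) = 0 := by
        apply (Finset.sum_eq_zero_iff_of_nonneg (fun i _ => by linarith [h i])).mp
        rw [Finset.sum_neg_distrib, hdsum]; ring
      have := this x (mem_univ x); linarith
  refine ⟨⟨l, ⟨hl0, hl1, hlst⟩, huniq⟩, ?_⟩
  rintro m ⟨hm0, hm1, hmst⟩
  exact pos_lemma P hpos m hm0 hm1 hmst
end

section
/- For any a > 0 and integer N ≥ 2, the function s ↦ (1 - (1+s)^{-1}) / (1 - (1+s)^{-N}) is strictly increasing on (0, ∞). -/
theorem moran_rho_strictMonoOn (N : ℕ) (hN : 2 ≤ N) :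
    StrictMonoOn (fun s : ℝ => (1 - (1 + s)⁻¹) / (1 - ((1 + s) ^ N)⁻¹))
      (Set.Ioi (0 : ℝ)) := by
  have key : ∀ s ∈ Set.Ioi (0:ℝ),
      (1 - (1 + s)⁻¹) / (1 - ((1 + s) ^ N)⁻¹)
        = (∑ i ∈ Finset.range N, ((1 + s)⁻¹) ^ i)⁻¹ := by
    intro s hs
    have hs' : (0:ℝ) < s := hs
    have hr : (1:ℝ) < 1 + s := by linarith
    have hr0 : (0:ℝ) < 1 + s := by linarith
    set x := (1 + s)⁻¹ with hx
    have hx1 : x < 1 := by rw [hx]; exact inv_lt_one_of_one_lt₀ hr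
    have hx0 : 0 < x := by rw [hx]; positivity
    have hxn : ((1 + s) ^ N)⁻¹ = x ^ N := by rw [hx, inv_pow]
    rw [hxn]
    have hgeom : 1 - x ^ N = (1 - x) * ∑ i ∈ Finset.range N, x ^ i := by
      have h := geom_sum_mul x N
      nlinarith [h]
    rw [hgeom]
    have hxne : 1 - x ≠ 0 := by linarith
    have hSpos : 0 < ∑ i ∈ Finset.range N, x ^ i := by
      apply Finset.sum_pos
      · intro i _; positivity
      · exact Finset.nonempty_range_iff.2 (by omega)
    rw [div_mul_eq_div_div, div_self hxne, one_div]
  intro a ha b hb hab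
  simp only
  rw [key a ha, key b hb]
  have ha' : (0:ℝ) < a := ha
  have hb' : (0:ℝ) < b := hb
  have hSb : 0 < ∑ i ∈ Finset.range N, ((1 + b)⁻¹) ^ i := by
    apply Finset.sum_pos
    · intro i _; positivity
    · exact Finset.nonempty_range_iff.2 (by omega)
  have hlt : ∑ i ∈ Finset.range N, ((1 + b)⁻¹) ^ i
      < ∑ i ∈ Finset.range N, ((1 + a)⁻¹) ^ i := by
    apply Finset.sum_lt_sum
    · intro i _
      exact pow_le_pow_left₀ (by positivity)
        (inv_anti₀ (by linarith) (by linarith)) i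
    · refine ⟨1, Finset.mem_range.2 (by omega), ?_⟩
      simp only [pow_one]
      exact inv_strictAnti₀ (by linarith) (by linarith)
  exact inv_strictAnti₀ hSb hlt
end

section
/- For integer N ≥ 2, the function s ↦ (1 - exp(-s)) / (1 - exp(-N·s)), extended by the value 1/N at s = 0, is continuous and strictly increasing on ℝ. -/
/-- Wright–Fisher fixation probability, extended by its neutral value at `s = 0`. -/
noncomputable def wfRhoExt (N : ℕ) (s : ℝ) : ℝ :=
  if s = 0 then 1 / (N : ℝ)
  else (1 - Real.exp (-s)) / (1 - Real.exp (-(N : ℝ) * s))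

noncomputable def wfG (N : ℕ) (s : ℝ) : ℝ :=
  ∑ k ∈ Finset.range N, Real.exp (-(k : ℝ) * s)

lemma wfG_pos (N : ℕ) (hN : 0 < N) (s : ℝ) : 0 < wfG N s :=
  Finset.sum_pos (fun _ _ => Real.exp_pos _)
    (Finset.nonempty_range_iff.mpr hN.ne')

lemma wfRhoExt_eq (N : ℕ) (hN : 0 < N) (s : ℝ) : wfRhoExt N s = (wfG N s)⁻¹ := by
  unfold wfRhoExt wfG
  by_cases hs : s = 0
  · simp [hs, one_div]
  · rw [if_neg hs]
    have hterm : ∀ k : ℕ, Real.exp (-(k : ℝ) * s) = (Real.exp (-s)) ^ k := by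
      intro k
      rw [← Real.exp_nat_mul]
      ring_nf
    have hsum : (∑ k ∈ Finset.range N, Real.exp (-(k : ℝ) * s))
        = ∑ k ∈ Finset.range N, (Real.exp (-s)) ^ k := by
      exact Finset.sum_congr rfl (fun k _ => hterm k)
    have hNs : Real.exp (-(N : ℝ) * s) = (Real.exp (-s)) ^ N := by
      rw [← Real.exp_nat_mul]; ring_nf
    set x := Real.exp (-s) with hxdef
    have hx1 : x ≠ 1 := by
      rw [hxdef, Ne, Real.exp_eq_one_iff]
      simpa using hs
    have hfac : 1 - x ^ N = (1 - x) * ∑ k ∈ Finset.range N, x ^ k := by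
      have := geom_sum_mul x N
      nlinarith [this]
    have hSpos : 0 < ∑ k ∈ Finset.range N, x ^ k := by
      refine Finset.sum_pos (fun k _ => pow_pos (Real.exp_pos _) k)
        (Finset.nonempty_range_iff.mpr hN.ne')
    rw [hsum, hNs, hfac]
    rw [div_mul_cancel_left₀ (sub_ne_zero.mpr (fun h => hx1 h.symm))]

lemma wfG_strictAnti (N : ℕ) (hN : 2 ≤ N) : StrictAnti (wfG N) := by
  intro a b hab
  unfold wfG
  refine Finset.sum_lt_sum (fun k _ => ?_) ⟨1, Finset.mem_range.mpr (by omega), ?_⟩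
  · apply Real.exp_le_exp.mpr
    have : (0:ℝ) ≤ (k:ℝ) := Nat.cast_nonneg k
    nlinarith
  · apply Real.exp_lt_exp.mpr
    simpa using hab

lemma wfG_continuous (N : ℕ) : Continuous (wfG N) := by
  unfold wfG
  exact continuous_finset_sum _ (fun k _ =>
    Real.continuous_exp.comp (by continuity))

theorem wfRhoExt_continuous_strictMono (N : ℕ) (hN : 2 ≤ N) :
    Continuous (wfRhoExt N) ∧ StrictMono (wfRhoExt N) := by
  have hN0 : 0 < N := by omega
  have heq : wfRhoExt N = fun s => (wfG N s)⁻¹ := by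
    funext s; exact wfRhoExt_eq N hN0 s
  rw [heq]
  constructor
  · exact (wfG_continuous N).inv₀ (fun s => (wfG_pos N hN0 s).ne')
  · intro a b hab
    have h := wfG_strictAnti N hN hab
    simpa [one_div] using one_div_lt_one_div_of_lt (wfG_pos N hN0 b) h
end
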